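/- arXiv:math/9903028 — 2 statements merged into one kernel-verified Lean document; each statement's English description precedes it below -/
import Mathlib

section
/- Let N ≥ 1 be an integer and q ∈ ℂ nonzero. Then in F_q(N): Ω_i z_k = z_k Ω_i and Ω_i z_k^* = z_k^* Ω_i whenever i ≤ k ≤ N−1; Ω_i z_k = q^2 z_k Ω_i and Ω_i z_k^* = q^{−2} z_k^* Ω_i whenever 0 ≤ k < i; z_i z_i^* − z_i^* z_i = (q^2 − 1) Ω_{i+1} and q^2 z_i z_i^* − z_i^* z_i = (q^2 − 1) Ω_i for every i; in particular Ω = Ω_0 commutes with all 2N generators and hence is central in F_q(N). -/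
open FreeAlgebra

/-- Generators of `F_q(N)`: `Sum.inl i` is `z_i` and `Sum.inr i` is `z_i^*`. -/
abbrev FqGen (N : ℕ) : Type := Fin N ⊕ Fin N

/-- The defining relations of `F_q(N)`. -/
inductive FqRel (N : ℕ) (q : ℂ) : FreeAlgebra ℂ (FqGen N) → FreeAlgebra ℂ (FqGen N) → Prop
  | zz (i j : Fin N) (h : i < j) :
      FqRel N q (ι ℂ (Sum.inl i) * ι ℂ (Sum.inl j))
        (q⁻¹ • (ι ℂ (Sum.inl j) * ι ℂ (Sum.inl i)))
  | ss (i j : Fin N) (h : i < j) :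
      FqRel N q (ι ℂ (Sum.inr i) * ι ℂ (Sum.inr j))
        (q • (ι ℂ (Sum.inr j) * ι ℂ (Sum.inr i)))
  | zs (i j : Fin N) (h : i ≠ j) :
      FqRel N q (ι ℂ (Sum.inl i) * ι ℂ (Sum.inr j))
        (q⁻¹ • (ι ℂ (Sum.inr j) * ι ℂ (Sum.inl i)))
  | heis (i : Fin N) :
      FqRel N q (ι ℂ (Sum.inl i) * ι ℂ (Sum.inr i) - ι ℂ (Sum.inr i) * ι ℂ (Sum.inl i))
        ((q ^ 2 - 1) • ∑ k ∈ Finset.univ.filter (fun k : Fin N => i < k),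
            ι ℂ (Sum.inl k) * ι ℂ (Sum.inr k))

/-- The algebra `F_q(N)`: the quotient of the free algebra by (the two-sided ideal
generated by) the defining relations. -/
abbrev Fq (N : ℕ) (q : ℂ) : Type := RingQuot (FqRel N q)

/-- The generator `z_i` of `F_q(N)`. -/
noncomputable def zGen (N : ℕ) (q : ℂ) (i : Fin N) : Fq N q :=
  RingQuot.mkAlgHom ℂ (FqRel N q) (ι ℂ (Sum.inl i))

/-- The generator `z_i^*` of `F_q(N)`. -/
noncomputable def zsGen (N : ℕ) (q : ℂ) (i : Fin N) : Fq N q :=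
  RingQuot.mkAlgHom ℂ (FqRel N q) (ι ℂ (Sum.inr i))


/-- `Ω_i = Σ_{k ≥ i} z_k z_k^*` (so `Ω_N = 0` and `Ω = Ω_0`). -/
noncomputable def OmegaEl (N : ℕ) (q : ℂ) (i : ℕ) : Fq N q :=
  ∑ k ∈ Finset.univ.filter (fun k : Fin N => i ≤ (k : ℕ)), zGen N q k * zsGen N q k

/-!
Write `w_j = z_j z_j^*`, so that `Ω_i = Σ_{j ≥ i} w_j`. The defining relations show that
`w_j` commutes with `z_k` and `z_k^*` for `j < k`, and twists them by `q^2` and `q^{-2}` for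
`k < j`; summing gives the relations for `k < i`. For `k = i` the twisted tail `Ω_{i+1}` is
exactly compensated by the correction term of `z_i z_i^* − z_i^* z_i = (q^2 − 1) Ω_{i+1}`, and
the case `i < k` follows by peeling off the summands `w_i, …, w_{k-1}`, which commute with the
generator. Centrality of `Ω_0` follows since the generators generate `F_q(N)`.
-/

theorem Finset.sum_mul_eq_smul_mul_sum {ι R A : Type*} [CommSemiring R] [Semiring A]
    [Algebra R A] (s : Finset ι) (f : ι → A) (x : A) (c : R)
    (h : ∀ j ∈ s, f j * x = c • (x * f j)) :
    (∑ j ∈ s, f j) * x = c • (x * ∑ j ∈ s, f j) := by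
  simp only [Finset.sum_mul, Finset.mul_sum, Finset.smul_sum]
  exact Finset.sum_congr rfl h

theorem RingQuot.mem_center_of_commute_mkAlgHom_ι {R X : Type*} [CommRing R]
    {r : FreeAlgebra R X → FreeAlgebra R X → Prop} (x : RingQuot r)
    (h : ∀ g, x * mkAlgHom R r (ι R g) = mkAlgHom R r (ι R g) * x) :
    x ∈ Subring.center (RingQuot r) := by
  rw [Subring.mem_center_iff]
  intro y
  obtain ⟨a, rfl⟩ := mkAlgHom_surjective R r y
  induction a using FreeAlgebra.induction with
  | grade0 c => rw [AlgHom.commutes]; exact Algebra.commutes c x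
  | grade1 g => exact (h g).symm
  | mul a b ha hb => rw [map_mul, mul_assoc, hb, ← mul_assoc, ha, mul_assoc]
  | add a b ha hb => rw [map_add, add_mul, mul_add, ha, hb]

namespace Fq

variable {N : ℕ} {q : ℂ}

local notation "Z" => zGen N q
local notation "S" => zsGen N q
local notation "Ω" => OmegaEl N q

theorem zGen_mul_zGen_of_lt {i j : Fin N} (h : i < j) : Z i * Z j = q⁻¹ • (Z j * Z i) := by
  simpa [zGen] using RingQuot.mkAlgHom_rel ℂ (FqRel.zz (q := q) i j h)

theorem zGen_mul_zGen_of_gt (hq : q ≠ 0) {i j : Fin N} (h : i < j) :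
    Z j * Z i = q • (Z i * Z j) := by
  rw [zGen_mul_zGen_of_lt h, smul_smul, mul_inv_cancel₀ hq, one_smul]

theorem zsGen_mul_zsGen_of_lt {i j : Fin N} (h : i < j) : S i * S j = q • (S j * S i) := by
  simpa [zsGen] using RingQuot.mkAlgHom_rel ℂ (FqRel.ss (q := q) i j h)

theorem zsGen_mul_zsGen_of_gt (hq : q ≠ 0) {i j : Fin N} (h : i < j) :
    S j * S i = q⁻¹ • (S i * S j) := by
  rw [zsGen_mul_zsGen_of_lt h, smul_smul, inv_mul_cancel₀ hq, one_smul]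

theorem zGen_mul_zsGen_of_ne {i j : Fin N} (h : i ≠ j) : Z i * S j = q⁻¹ • (S j * Z i) := by
  simpa [zGen, zsGen] using RingQuot.mkAlgHom_rel ℂ (FqRel.zs (q := q) i j h)

theorem zsGen_mul_zGen_of_ne (hq : q ≠ 0) {i j : Fin N} (h : i ≠ j) :
    S j * Z i = q • (Z i * S j) := by
  rw [zGen_mul_zsGen_of_ne h, smul_smul, mul_inv_cancel₀ hq, one_smul]

theorem zGen_mul_zsGen_sub_zsGen_mul_zGen (i : Fin N) :
    Z i * S i - S i * Z i = (q ^ 2 - 1) • Ω (i + 1) := by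
  have hfilter : Finset.univ.filter (fun k : Fin N => (i : ℕ) + 1 ≤ k) =
      Finset.univ.filter (fun k : Fin N => i < k) := by
    ext k
    simp only [Finset.mem_filter, Finset.mem_univ, true_and, Fin.lt_def]
    omega
  simpa [OmegaEl, hfilter, zGen, zsGen] using RingQuot.mkAlgHom_rel ℂ (FqRel.heis (q := q) i)

theorem OmegaEl_eq_add {m : ℕ} (hm : m < N) :
    Ω m = Z ⟨m, hm⟩ * S ⟨m, hm⟩ + Ω (m + 1) := by
  have hfilter : Finset.univ.filter (fun k : Fin N => m ≤ k) =
      insert ⟨m, hm⟩ (Finset.univ.filter (fun k : Fin N => m + 1 ≤ k)) := by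
    ext k
    simp only [Finset.mem_filter, Finset.mem_univ, true_and, Finset.mem_insert, Fin.ext_iff]
    omega
  rw [OmegaEl, hfilter, Finset.sum_insert (by simp)]
  rfl

theorem OmegaEl_coe_eq_add (k : Fin N) : Ω k = Z k * S k + Ω (k + 1) :=
  OmegaEl_eq_add k.isLt

theorem zGen_mul_zsGen_mul_zGen_of_lt (hq : q ≠ 0) {j k : Fin N} (h : k < j) :
    Z j * S j * Z k = q ^ 2 • (Z k * (Z j * S j)) := by
  rw [mul_assoc, zsGen_mul_zGen_of_ne hq h.ne, mul_smul_comm, ← mul_assoc,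
    zGen_mul_zGen_of_gt hq h, smul_mul_assoc, smul_smul, mul_assoc, sq]

theorem zGen_mul_zsGen_mul_zGen_of_gt (hq : q ≠ 0) {j k : Fin N} (h : j < k) :
    Z j * S j * Z k = Z k * (Z j * S j) := by
  rw [mul_assoc, zsGen_mul_zGen_of_ne hq h.ne', mul_smul_comm, ← mul_assoc,
    zGen_mul_zGen_of_lt h, smul_mul_assoc, smul_smul, mul_inv_cancel₀ hq, one_smul, mul_assoc]

theorem zGen_mul_zsGen_mul_zsGen_of_lt (hq : q ≠ 0) {j k : Fin N} (h : k < j) :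
    Z j * S j * S k = (q ^ 2)⁻¹ • (S k * (Z j * S j)) := by
  rw [mul_assoc, zsGen_mul_zsGen_of_gt hq h, mul_smul_comm, ← mul_assoc,
    zGen_mul_zsGen_of_ne h.ne', smul_mul_assoc, smul_smul, mul_assoc, ← mul_inv, sq]

theorem zGen_mul_zsGen_mul_zsGen_of_gt (hq : q ≠ 0) {j k : Fin N} (h : j < k) :
    Z j * S j * S k = S k * (Z j * S j) := by
  rw [mul_assoc, zsGen_mul_zsGen_of_lt h, mul_smul_comm, ← mul_assoc,
    zGen_mul_zsGen_of_ne h.ne, smul_mul_assoc, smul_smul, mul_inv_cancel₀ hq, one_smul, mul_assoc]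

theorem OmegaEl_mul_zGen_of_lt (hq : q ≠ 0) {m : ℕ} {k : Fin N} (hk : (k : ℕ) < m) :
    Ω m * Z k = q ^ 2 • (Z k * Ω m) :=
  Finset.sum_mul_eq_smul_mul_sum _ _ _ _ fun j hj =>
    zGen_mul_zsGen_mul_zGen_of_lt hq (Fin.lt_def.2 (by simp at hj; omega))

theorem OmegaEl_mul_zsGen_of_lt (hq : q ≠ 0) {m : ℕ} {k : Fin N} (hk : (k : ℕ) < m) :
    Ω m * S k = (q ^ 2)⁻¹ • (S k * Ω m) :=
  Finset.sum_mul_eq_smul_mul_sum _ _ _ _ fun j hj =>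
    zGen_mul_zsGen_mul_zsGen_of_lt hq (Fin.lt_def.2 (by simp at hj; omega))

theorem OmegaEl_mul_zGen_self (hq : q ≠ 0) (k : Fin N) : Ω k * Z k = Z k * Ω k := by
  have hheis : S k * Z k = Z k * S k - (q ^ 2 - 1) • Ω (k + 1) := by
    rw [← zGen_mul_zsGen_sub_zsGen_mul_zGen]; abel
  rw [OmegaEl_coe_eq_add, add_mul, mul_assoc, hheis, OmegaEl_mul_zGen_of_lt hq (Nat.lt_add_one _),
    mul_sub, mul_smul_comm, mul_add]
  module

theorem OmegaEl_mul_zsGen_self (hq : q ≠ 0) (k : Fin N) : Ω k * S k = S k * Ω k := by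
  have hheis : Z k * S k = S k * Z k + (q ^ 2 - 1) • Ω (k + 1) := by
    rw [← zGen_mul_zsGen_sub_zsGen_mul_zGen]; abel
  rw [OmegaEl_coe_eq_add, add_mul]
  nth_rw 1 [hheis]
  rw [add_mul, smul_mul_assoc, OmegaEl_mul_zsGen_of_lt hq (Nat.lt_add_one _), mul_assoc, mul_add,
    smul_smul]
  match_scalars <;> field_simp
  ring

theorem OmegaEl_mul_zGen_of_le (hq : q ≠ 0) {m : ℕ} {k : Fin N} (hmk : m ≤ k) :
    Ω m * Z k = Z k * Ω m := by
  induction hmk using Nat.decreasingInduction with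
  | self => exact OmegaEl_mul_zGen_self hq k
  | of_succ m hm ih =>
    rw [OmegaEl_eq_add (hm.trans k.isLt), add_mul, mul_add, ih,
      zGen_mul_zsGen_mul_zGen_of_gt hq (Fin.lt_def.2 hm)]

theorem OmegaEl_mul_zsGen_of_le (hq : q ≠ 0) {m : ℕ} {k : Fin N} (hmk : m ≤ k) :
    Ω m * S k = S k * Ω m := by
  induction hmk using Nat.decreasingInduction with
  | self => exact OmegaEl_mul_zsGen_self hq k
  | of_succ m hm ih =>
    rw [OmegaEl_eq_add (hm.trans k.isLt), add_mul, mul_add, ih,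
      zGen_mul_zsGen_mul_zsGen_of_gt hq (Fin.lt_def.2 hm)]

theorem smul_zGen_mul_zsGen_sub_zsGen_mul_zGen (i : Fin N) :
    q ^ 2 • (Z i * S i) - S i * Z i = (q ^ 2 - 1) • Ω i := by
  rw [OmegaEl_coe_eq_add, smul_add, ← zGen_mul_zsGen_sub_zsGen_mul_zGen]
  module

theorem OmegaEl_zero_mem_center (hq : q ≠ 0) : Ω 0 ∈ Subring.center (Fq N q) :=
  RingQuot.mem_center_of_commute_mkAlgHom_ι _ fun
    | .inl k => OmegaEl_mul_zGen_of_le hq k.val.zero_le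
    | .inr k => OmegaEl_mul_zsGen_of_le hq k.val.zero_le

end Fq

theorem fq_Omega_relations_general (N : ℕ) (q : ℂ) (hq : q ≠ 0) :
    (∀ i k : Fin N, i ≤ k →
        OmegaEl N q i * zGen N q k = zGen N q k * OmegaEl N q i) ∧
    (∀ i k : Fin N, k < i →
        OmegaEl N q i * zGen N q k = q ^ 2 • (zGen N q k * OmegaEl N q i)) ∧
    (∀ i k : Fin N, i ≤ k →
        OmegaEl N q i * zsGen N q k = zsGen N q k * OmegaEl N q i) ∧
    (∀ i k : Fin N, k < i →
        OmegaEl N q i * zsGen N q k = (q ^ 2)⁻¹ • (zsGen N q k * OmegaEl N q i)) ∧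
    (∀ i : Fin N,
        zGen N q i * zsGen N q i - zsGen N q i * zGen N q i =
          (q ^ 2 - 1) • OmegaEl N q ((i : ℕ) + 1)) ∧
    (∀ i : Fin N,
        q ^ 2 • (zGen N q i * zsGen N q i) - zsGen N q i * zGen N q i =
          (q ^ 2 - 1) • OmegaEl N q i) ∧
    OmegaEl N q 0 ∈ Subring.center (Fq N q) :=
  ⟨fun _ _ h => Fq.OmegaEl_mul_zGen_of_le hq h, fun _ _ h => Fq.OmegaEl_mul_zGen_of_lt hq h,
    fun _ _ h => Fq.OmegaEl_mul_zsGen_of_le hq h, fun _ _ h => Fq.OmegaEl_mul_zsGen_of_lt hq h,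
    Fq.zGen_mul_zsGen_sub_zsGen_mul_zGen, Fq.smul_zGen_mul_zsGen_sub_zsGen_mul_zGen,
    Fq.OmegaEl_zero_mem_center hq⟩

/-- The commutation relations of the `Ω_i` with the generators; in particular `Ω = Ω_0`
is central. -/
theorem fq_Omega_relations (N : ℕ) (hN : 1 ≤ N) (q : ℂ) (hq : q ≠ 0) :
    (∀ i k : Fin N, i ≤ k →
        OmegaEl N q i * zGen N q k = zGen N q k * OmegaEl N q i) ∧
    (∀ i k : Fin N, k < i →
        OmegaEl N q i * zGen N q k = q ^ 2 • (zGen N q k * OmegaEl N q i)) ∧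
    (∀ i k : Fin N, i ≤ k →
        OmegaEl N q i * zsGen N q k = zsGen N q k * OmegaEl N q i) ∧
    (∀ i k : Fin N, k < i →
        OmegaEl N q i * zsGen N q k = (q ^ 2)⁻¹ • (zsGen N q k * OmegaEl N q i)) ∧
    (∀ i : Fin N,
        zGen N q i * zsGen N q i - zsGen N q i * zGen N q i =
          (q ^ 2 - 1) • OmegaEl N q ((i : ℕ) + 1)) ∧
    (∀ i : Fin N,
        q ^ 2 • (zGen N q i * zsGen N q i) - zsGen N q i * zGen N q i =
          (q ^ 2 - 1) • OmegaEl N q i) ∧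
    OmegaEl N q 0 ∈ Subring.center (Fq N q) :=
  fq_Omega_relations_general N q hq
end

section
/- Let N ≥ 1 be an integer and let q ∈ ℂ be nonzero and not a root of unity. Set p_b = q^{−2b} − 1 for b ≥ 1 (so the p_b are distinct and nonzero), and define a_0(0) = 1, a_0(n) = 0 for n ≥ 1, and a_t(n) = Σ_{b=1}^{t} p_b^{n−1} / ∏_{1 ≤ a ≤ t, a ≠ b} (p_b − p_a) for 1 ≤ t. Then: (i) for every 0 ≤ i ≤ N−1 and every n ≥ 0, in F_q(N) one has (z_i z_i^*)^n = Σ_{t=0}^{n} a_t(n) z_i^t (z_i^*)^t Ω_{i+1}^{n−t}; (ii) a_t(s) = 0 for all integers 1 ≤ s ≤ t−1, and a_t(t) = 1 for all t ≥ 1. -/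
open FreeAlgebra

/-- `p_b = q^{−2b} − 1`. -/
noncomputable def pCoef (q : ℂ) (b : ℕ) : ℂ := (q ^ (2 * b))⁻¹ - 1

/-- The coefficients `a_t(n)`: `a_0(0) = 1`, `a_0(n) = 0` for `n ≥ 1`, and for `t ≥ 1`
`a_t(n) = Σ_{b=1}^{t} p_b^{n−1} / ∏_{1 ≤ a ≤ t, a ≠ b} (p_b − p_a)`. -/
noncomputable def aCoef (q : ℂ) (t n : ℕ) : ℂ :=
  if t = 0 then (if n = 0 then 1 else 0)
  else ∑ b ∈ Finset.Icc 1 t,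
    pCoef q b ^ (n - 1) / ∏ a ∈ (Finset.Icc 1 t).erase b, (pCoef q b - pCoef q a)

noncomputable def Sval (x : ℕ → ℂ) (B : Finset ℕ) (m : ℕ) : ℂ :=
  ∑ b ∈ B, x b ^ m / ∏ a ∈ B.erase b, (x b - x a)

lemma Sval_recur (x : ℕ → ℂ) (B : Finset ℕ)
    (hx : ∀ a ∈ B, ∀ b ∈ B, a ≠ b → x a ≠ x b) {c : ℕ} (hc : c ∈ B) (m : ℕ) :
    Sval x B (m + 1) = x c * Sval x B m + Sval x (B.erase c) m := by
  have key : Sval x B (m+1) - x c * Sval x B m = Sval x (B.erase c) m := by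
    unfold Sval
    rw [Finset.mul_sum, ← Finset.sum_sub_distrib]
    have h1 : ∀ b ∈ B, x b ^ (m+1) / ∏ a ∈ B.erase b, (x b - x a)
        - x c * (x b ^ m / ∏ a ∈ B.erase b, (x b - x a))
        = (x b - x c) * x b ^ m / ∏ a ∈ B.erase b, (x b - x a) := by
      intro b _
      rw [pow_succ]
      ring
    rw [Finset.sum_congr rfl h1]
    rw [← Finset.sum_erase_add B _ hc, sub_self, zero_mul, zero_div, add_zero]
    apply Finset.sum_congr rfl
    intro b hb
    have hbB : b ∈ B := Finset.mem_of_mem_erase hb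
    have hbc : b ≠ c := Finset.ne_of_mem_erase hb
    have hcB : c ∈ B.erase b := Finset.mem_erase.mpr ⟨hbc.symm, hc⟩
    rw [← Finset.mul_prod_erase _ _ hcB, Finset.erase_right_comm]
    exact mul_div_mul_left _ _ (sub_ne_zero.mpr (hx b hbB c hc hbc))
  linear_combination key

lemma Sval_val (x : ℕ → ℂ) : ∀ (B : Finset ℕ), (∀ a ∈ B, ∀ b ∈ B, a ≠ b → x a ≠ x b) →
    ∀ m : ℕ, m < B.card → Sval x B m = if m = B.card - 1 then 1 else 0 := by
  intro B
  induction B using Finset.strongInduction with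
  | _ B ih =>
    intro hx m hm
    by_cases hcard : B.card = 1
    · obtain ⟨b, rfl⟩ := Finset.card_eq_one.mp hcard
      rw [Finset.card_singleton] at hm ⊢
      interval_cases m
      simp [Sval]
    · have h2 : 2 ≤ B.card := by
        have h0 : 0 < B.card := lt_of_le_of_lt (Nat.zero_le m) hm
        omega
      obtain ⟨c, hc, c', hc', hcc⟩ := Finset.one_lt_card.mp (show 1 < B.card by omega)
      have hxsub : ∀ (d : ℕ), ∀ a ∈ B.erase d, ∀ b ∈ B.erase d, a ≠ b → x a ≠ x b := by
        intro d a ha b hb hab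
        exact hx a (Finset.mem_of_mem_erase ha) b (Finset.mem_of_mem_erase hb) hab
      have hcarde : ∀ d ∈ B, (B.erase d).card = B.card - 1 := fun d hd =>
        Finset.card_erase_of_mem hd
      have hzero : ∀ k, k < B.card - 1 → Sval x B k = 0 := by
        intro k hk
        have e1 := Sval_recur x B hx hc k
        have e2 := Sval_recur x B hx hc' k
        have hb1 : k < (B.erase c).card := by rw [hcarde c hc]; omega
        have hb2 : k < (B.erase c').card := by rw [hcarde c' hc']; omega
        have v1 := ih (B.erase c) (Finset.erase_ssubset hc) (hxsub c) k hb1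
        have v2 := ih (B.erase c') (Finset.erase_ssubset hc') (hxsub c') k hb2
        rw [hcarde c hc] at v1
        rw [hcarde c' hc'] at v2
        have hdiff : (x c - x c') * Sval x B k = 0 := by
          rw [v1] at e1; rw [v2] at e2
          linear_combination e2 - e1
        have hne : x c - x c' ≠ 0 := sub_ne_zero.mpr (hx c hc c' hc' hcc)
        exact (mul_eq_zero.mp hdiff).resolve_left hne
      by_cases hmtop : m = B.card - 1
      · rw [if_pos hmtop]
        obtain ⟨k, rfl⟩ : ∃ k, m = k + 1 := ⟨m - 1, by omega⟩
        have e1 := Sval_recur x B hx hc k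
        have hb1 : k < (B.erase c).card := by rw [hcarde c hc]; omega
        have v1 := ih (B.erase c) (Finset.erase_ssubset hc) (hxsub c) k hb1
        rw [hcarde c hc] at v1
        rw [if_pos (by omega)] at v1
        rw [e1, hzero k (by omega), v1, mul_zero, zero_add]
      · rw [if_neg hmtop]
        exact hzero m (by omega)


section
variable (q : ℂ) (hq : q ≠ 0) (hq' : ∀ k : ℕ, 0 < k → q ^ k ≠ 1)

include hq hq' in
lemma pCoef_inj : ∀ a b : ℕ, a ≠ b → pCoef q a ≠ pCoef q b := by
  have key : ∀ a b : ℕ, a < b → pCoef q a ≠ pCoef q b := by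
    intro a b hab h
    have hpow : q ^ (2 * a) = q ^ (2 * b) := by
      simp only [pCoef] at h
      exact inv_injective (by linear_combination h)
    have h2 : q ^ (2 * b) = q ^ (2 * a) * q ^ (2 * (b - a)) := by
      rw [← pow_add]; congr 1; omega
    have hne : q ^ (2 * a) ≠ 0 := pow_ne_zero _ hq
    have : q ^ (2 * (b - a)) = 1 := by
      have h3 : q ^ (2 * a) * q ^ (2 * (b - a)) = q ^ (2 * a) := (hpow.trans h2).symm
      exact (mul_right_eq_self₀.mp h3).resolve_right hne
    exact hq' (2 * (b - a)) (by omega) this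
  intro a b hab
  rcases Nat.lt_or_ge a b with h | h
  · exact key a b h
  · exact fun hh => key b a (by omega) hh.symm

lemma aCoef_eq_Sval (t n : ℕ) (ht : 1 ≤ t) :
    aCoef q t n = Sval (pCoef q) (Finset.Icc 1 t) (n - 1) := by
  rw [aCoef, if_neg (by omega)]; rfl
end


section
variable (q : ℂ) (hq : q ≠ 0) (hq' : ∀ k : ℕ, 0 < k → q ^ k ≠ 1)

lemma card_Icc1 (t : ℕ) : (Finset.Icc 1 t).card = t := by
  rw [Nat.card_Icc]; omega

include hq hq' in
lemma aCoef_vanish (t s : ℕ) (hs : 1 ≤ s) (hst : s ≤ t - 1) : aCoef q t s = 0 := by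
  have ht : 2 ≤ t := by omega
  rw [aCoef_eq_Sval q t s (by omega)]
  rw [Sval_val (pCoef q) (Finset.Icc 1 t)
    (fun a _ b _ hab => pCoef_inj q hq hq' a b hab) (s-1)
    (by rw [card_Icc1]; omega)]
  rw [card_Icc1, if_neg (by omega)]

include hq hq' in
lemma aCoef_diag (t : ℕ) (ht : 1 ≤ t) : aCoef q t t = 1 := by
  rw [aCoef_eq_Sval q t t ht]
  rw [Sval_val (pCoef q) (Finset.Icc 1 t)
    (fun a _ b _ hab => pCoef_inj q hq hq' a b hab) (t-1)
    (by rw [card_Icc1]; omega)]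
  rw [card_Icc1, if_pos rfl]

lemma Icc_erase_top (t : ℕ) (ht : 1 ≤ t) : (Finset.Icc 1 t).erase t = Finset.Icc 1 (t-1) := by
  ext a
  simp only [Finset.mem_erase, Finset.mem_Icc]
  omega

include hq hq' in
lemma aCoef_rec' (t n : ℕ) (hn : 1 ≤ n) :
    aCoef q (t+1) (n+1) = aCoef q t n + pCoef q (t+1) * aCoef q (t+1) n := by
  rw [aCoef_eq_Sval q (t+1) (n+1) (by omega), aCoef_eq_Sval q (t+1) n (by omega)]
  have hrec := Sval_recur (pCoef q) (Finset.Icc 1 (t+1))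
    (fun a _ b _ hab => pCoef_inj q hq hq' a b hab)
    (c := t+1) (by simp) (n-1)
  rw [show n - 1 + 1 = n by omega] at hrec
  rw [show n + 1 - 1 = n by omega, hrec, Icc_erase_top (t+1) (by omega),
    Nat.add_sub_cancel]
  have htail : Sval (pCoef q) (Finset.Icc 1 t) (n-1) = aCoef q t n := by
    rcases Nat.eq_zero_or_pos t with rfl | ht
    · rw [show Finset.Icc 1 0 = (∅ : Finset ℕ) by simp, aCoef, if_pos rfl,
        if_neg (by omega)]
      simp [Sval]
    · rw [aCoef_eq_Sval q t n ht]
  rw [htail]; ring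
end


section Alg
variable {N : ℕ} {q : ℂ}

lemma rel_zz {i j : Fin N} (h : i < j) :
    zGen N q i * zGen N q j = q⁻¹ • (zGen N q j * zGen N q i) := by
  have h1 := RingQuot.mkAlgHom_rel ℂ (FqRel.zz (N := N) (q := q) i j h)
  simpa [zGen, map_mul] using h1

lemma rel_ss {i j : Fin N} (h : i < j) :
    zsGen N q i * zsGen N q j = q • (zsGen N q j * zsGen N q i) := by
  have h1 := RingQuot.mkAlgHom_rel ℂ (FqRel.ss (N := N) (q := q) i j h)
  simpa [zsGen, map_mul] using h1

lemma rel_zs {i j : Fin N} (h : i ≠ j) :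
    zGen N q i * zsGen N q j = q⁻¹ • (zsGen N q j * zGen N q i) := by
  have h1 := RingQuot.mkAlgHom_rel ℂ (FqRel.zs (N := N) (q := q) i j h)
  simpa [zGen, zsGen, map_mul] using h1

lemma Omega_succ (i : Fin N) :
    OmegaEl N q ((i : ℕ) + 1)
      = ∑ k ∈ Finset.univ.filter (fun k : Fin N => i < k), zGen N q k * zsGen N q k := by
  rfl

lemma rel_heis (i : Fin N) :
    zGen N q i * zsGen N q i - zsGen N q i * zGen N q i
      = (q ^ 2 - 1) • OmegaEl N q ((i : ℕ) + 1) := by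
  have h1 := RingQuot.mkAlgHom_rel ℂ (FqRel.heis (N := N) (q := q) i)
  rw [Omega_succ]
  simpa [zGen, zsGen, map_mul, map_sub, map_sum] using h1


variable (hq : q ≠ 0)

include hq in
lemma zz_gen {i j : Fin N} (h : i < j) :
    zGen N q j * zGen N q i = q • (zGen N q i * zGen N q j) := by
  rw [rel_zz h, smul_smul, mul_inv_cancel₀ hq, one_smul]

include hq in
lemma sz_gen {i j : Fin N} (h : i ≠ j) :
    zsGen N q j * zGen N q i = q • (zGen N q i * zsGen N q j) := by
  rw [rel_zs h, smul_smul, mul_inv_cancel₀ hq, one_smul]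

include hq in
lemma Omega_z (i : Fin N) :
    OmegaEl N q ((i : ℕ) + 1) * zGen N q i
      = (q ^ 2) • (zGen N q i * OmegaEl N q ((i : ℕ) + 1)) := by
  rw [Omega_succ, Finset.sum_mul, Finset.mul_sum, Finset.smul_sum]
  apply Finset.sum_congr rfl
  intro k hk
  have hik : i < k := (Finset.mem_filter.mp hk).2
  calc zGen N q k * zsGen N q k * zGen N q i
      = zGen N q k * (zsGen N q k * zGen N q i) := by rw [mul_assoc]
    _ = zGen N q k * (q • (zGen N q i * zsGen N q k)) := by rw [sz_gen hq hik.ne]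
    _ = q • ((zGen N q k * zGen N q i) * zsGen N q k) := by
        rw [mul_smul_comm, mul_assoc]
    _ = q • ((q • (zGen N q i * zGen N q k)) * zsGen N q k) := by rw [zz_gen hq hik]
    _ = (q * q) • (zGen N q i * (zGen N q k * zsGen N q k)) := by
        rw [smul_mul_assoc, smul_smul, mul_assoc]
    _ = (q ^ 2) • (zGen N q i * (zGen N q k * zsGen N q k)) := by rw [sq]

include hq in
lemma s_Omega (i : Fin N) :
    zsGen N q i * OmegaEl N q ((i : ℕ) + 1)
      = (q ^ 2) • (OmegaEl N q ((i : ℕ) + 1) * zsGen N q i) := by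
  rw [Omega_succ, Finset.mul_sum, Finset.sum_mul, Finset.smul_sum]
  apply Finset.sum_congr rfl
  intro k hk
  have hik : i < k := (Finset.mem_filter.mp hk).2
  calc zsGen N q i * (zGen N q k * zsGen N q k)
      = (zsGen N q i * zGen N q k) * zsGen N q k := by rw [mul_assoc]
    _ = (q • (zGen N q k * zsGen N q i)) * zsGen N q k := by rw [sz_gen hq hik.ne']
    _ = q • (zGen N q k * (zsGen N q i * zsGen N q k)) := by
        rw [smul_mul_assoc, mul_assoc]
    _ = q • (zGen N q k * (q • (zsGen N q k * zsGen N q i))) := by rw [rel_ss hik]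
    _ = (q * q) • ((zGen N q k * zsGen N q k) * zsGen N q i) := by
        rw [mul_smul_comm, smul_smul, mul_assoc]
    _ = (q ^ 2) • (zGen N q k * zsGen N q k * zsGen N q i) := by rw [sq]

include hq in
lemma Omega_s (i : Fin N) :
    OmegaEl N q ((i : ℕ) + 1) * zsGen N q i
      = ((q ^ 2)⁻¹) • (zsGen N q i * OmegaEl N q ((i : ℕ) + 1)) := by
  rw [s_Omega hq, smul_smul, inv_mul_cancel₀ (pow_ne_zero 2 hq), one_smul]

lemma heis_sz (i : Fin N) :
    zsGen N q i * zGen N q i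
      = zGen N q i * zsGen N q i - (q ^ 2 - 1) • OmegaEl N q ((i : ℕ) + 1) := by
  rw [sub_eq_iff_eq_add.mp (rel_heis (N := N) (q := q) i), add_sub_cancel_left]

end Alg

section Abstract
variable {A : Type*} [Ring A] [Algebra ℂ A] {q : ℂ} (hq : q ≠ 0)
variable {z s w : A}
variable (hsz : s * z = z * s - (q ^ 2 - 1) • w)
variable (hwz : w * z = (q ^ 2) • (z * w))
variable (hws : w * s = ((q ^ 2)⁻¹) • (s * w))

include hwz in
lemma abs_wzpow (t : ℕ) : w * z ^ t = (q ^ (2 * t)) • (z ^ t * w) := by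
  induction t with
  | zero => simp
  | succ t ih =>
      rw [pow_succ, ← mul_assoc, ih, smul_mul_assoc, mul_assoc, hwz,
        mul_smul_comm, smul_smul, ← mul_assoc, ← pow_add,
        show 2 * t + 2 = 2 * (t + 1) from by omega]

include hws in
lemma abs_wspow (t : ℕ) : w * s ^ t = ((q ^ (2 * t))⁻¹) • (s ^ t * w) := by
  induction t with
  | zero => simp
  | succ t ih =>
      rw [pow_succ, ← mul_assoc, ih, smul_mul_assoc, mul_assoc, hws,
        mul_smul_comm, smul_smul, ← mul_assoc, ← mul_inv, ← pow_add,
        show 2 * t + 2 = 2 * (t + 1) from by omega]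

include hsz hwz in
lemma abs_szpow (t : ℕ) :
    s * z ^ (t + 1) = z ^ (t + 1) * s - (q ^ (2 * (t + 1)) - 1) • (z ^ t * w) := by
  induction t with
  | zero => simpa using hsz
  | succ t ih =>
      have step : s * z ^ (t + 2) = (s * z ^ (t + 1)) * z := by
        rw [pow_succ, ← mul_assoc]
      rw [step, ih, sub_mul, smul_mul_assoc, mul_assoc, mul_assoc, hsz, hwz]
      rw [mul_sub, mul_smul_comm, mul_smul_comm, smul_smul, ← mul_assoc,
        ← pow_succ, ← mul_assoc, ← pow_succ, sub_sub, ← add_smul]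
      congr 1
      rw [show 2 * (t + 1 + 1) = 2 * (t + 1) + 2 from by omega, pow_add]
      ring

include hq hsz hwz hws in
lemma abs_key (t m : ℕ) :
    (z * s) * (z ^ t * s ^ t * w ^ m)
      = z ^ (t + 1) * s ^ (t + 1) * w ^ m + pCoef q t • (z ^ t * s ^ t * w ^ (m + 1)) := by
  cases t with
  | zero => simp [pCoef, pow_succ', mul_assoc]
  | succ u =>
    have h0 : q ^ (2 * (u + 1)) ≠ 0 := pow_ne_zero _ hq
    calc (z * s) * (z ^ (u+1) * s ^ (u+1) * w ^ m)
        = z * ((s * z ^ (u+1)) * (s ^ (u+1) * w ^ m)) := by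
          simp only [pow_succ', mul_assoc]
      _ = z * ((z ^ (u+1) * s - (q ^ (2*(u+1)) - 1) • (z ^ u * w)) * (s ^ (u+1) * w ^ m)) := by
          rw [abs_szpow hsz hwz]
      _ = z * (z ^ (u+1) * s * (s ^ (u+1) * w ^ m))
          - z * (((q ^ (2*(u+1)) - 1) • (z ^ u * w)) * (s ^ (u+1) * w ^ m)) := by
          rw [sub_mul, mul_sub]
      _ = z ^ (u+2) * s ^ (u+2) * w ^ m
          - (q ^ (2*(u+1)) - 1) • (z ^ (u+1) * ((w * s ^ (u+1)) * w ^ m)) := by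
          congr 1
          · simp only [pow_succ', mul_assoc]
          · simp only [smul_mul_assoc, mul_smul_comm, smul_smul, pow_succ', mul_assoc]
      _ = z ^ (u+2) * s ^ (u+2) * w ^ m
          - ((q ^ (2*(u+1)) - 1) * (q ^ (2*(u+1)))⁻¹) • (z ^ (u+1) * s ^ (u+1) * w ^ (m+1)) := by
          rw [abs_wspow hws]
          simp only [smul_mul_assoc, mul_smul_comm, smul_smul, pow_succ', mul_assoc]
      _ = z ^ (u+2) * s ^ (u+2) * w ^ m
          + pCoef q (u+1) • (z ^ (u+1) * s ^ (u+1) * w ^ (m+1)) := by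
          rw [sub_eq_add_neg, ← neg_smul]
          congr 1
          simp only [pCoef]
          field_simp
          congr 1
          ring

end Abstract


section AbstractMain
variable {A : Type*} [Ring A] [Algebra ℂ A] {q : ℂ} (hq : q ≠ 0)
variable {z s w : A}
variable (hsz : s * z = z * s - (q ^ 2 - 1) • w)
variable (hwz : w * z = (q ^ 2) • (z * w))
variable (hws : w * s = ((q ^ 2)⁻¹) • (s * w))

include hq hsz hwz hws in
lemma abs_main (hq' : ∀ k : ℕ, 0 < k → q ^ k ≠ 1) (n : ℕ) :
    (z * s) ^ n
      = ∑ t ∈ Finset.range (n + 1), aCoef q t n • (z ^ t * s ^ t * w ^ (n - t)) := by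
  induction n with
  | zero => simp [aCoef]
  | succ n ih =>
    rcases Nat.eq_zero_or_pos n with rfl | hn
    · rw [pow_one, Finset.sum_range_succ, Finset.sum_range_one]
      have h0 : aCoef q 0 1 = 0 := by simp [aCoef]
      have h1 : aCoef q 1 1 = 1 := aCoef_diag q hq hq' 1 le_rfl
      rw [h0, h1]
      simp
    · rw [pow_succ', ih, Finset.mul_sum]
      have hstep : ∀ t ∈ Finset.range (n+1),
          (z * s) * (aCoef q t n • (z ^ t * s ^ t * w ^ (n - t)))
          = aCoef q t n • (z ^ (t+1) * s ^ (t+1) * w ^ (n - t))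
            + (aCoef q t n * pCoef q t) • (z ^ t * s ^ t * w ^ (n - t + 1)) := by
        intro t _
        rw [mul_smul_comm, abs_key hq hsz hwz hws, smul_add, smul_smul]
      rw [Finset.sum_congr rfl hstep, Finset.sum_add_distrib]
      rw [Finset.sum_range_succ'
        (fun t => aCoef q t (n+1) • (z ^ t * s ^ t * w ^ (n + 1 - t))) (n+1)]
      have hz0 : aCoef q 0 (n+1) = 0 := by simp [aCoef]
      rw [hz0, zero_smul, add_zero]
      have hsplit : ∀ t ∈ Finset.range (n+1),
          aCoef q (t+1) (n+1) • (z ^ (t+1) * s ^ (t+1) * w ^ (n + 1 - (t+1)))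
          = aCoef q t n • (z ^ (t+1) * s ^ (t+1) * w ^ (n - t))
            + (pCoef q (t+1) * aCoef q (t+1) n) • (z ^ (t+1) * s ^ (t+1) * w ^ (n - t)) := by
        intro t _
        rw [show n + 1 - (t+1) = n - t from by omega, aCoef_rec' q hq hq' t n hn, add_smul]
      rw [Finset.sum_congr rfl hsplit, Finset.sum_add_distrib]
      congr 1
      rw [Finset.sum_range_succ'
        (fun t => (aCoef q t n * pCoef q t) • (z ^ t * s ^ t * w ^ (n - t + 1))) n]
      have hp0 : pCoef q 0 = 0 := by simp [pCoef]
      rw [hp0, mul_zero, zero_smul, add_zero]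
      rw [Finset.sum_range_succ
        (fun t => (pCoef q (t+1) * aCoef q (t+1) n) • (z ^ (t+1) * s ^ (t+1) * w ^ (n - t)))]
      have hvan : aCoef q (n+1) n = 0 := aCoef_vanish q hq hq' (n+1) n hn (by omega)
      rw [hvan, mul_zero, zero_smul, add_zero]
      apply Finset.sum_congr rfl
      intro t ht
      have htn : t < n := Finset.mem_range.mp ht
      rw [show n - (t+1) + 1 = n - t from by omega, mul_comm]
end AbstractMain

/-- Lemma: `(z_i z_i^*)^n = Σ_{t=0}^{n} a_t(n) z_i^t (z_i^*)^t Ω_{i+1}^{n−t}`, and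
`a_t(s) = 0` for `1 ≤ s ≤ t−1`, `a_t(t) = 1` for `t ≥ 1`. -/
theorem fq_aCoef_expansion (N : ℕ) (hN : 1 ≤ N) (q : ℂ) (hq : q ≠ 0)
    (hq' : ∀ k : ℕ, 0 < k → q ^ k ≠ 1) :
    (∀ i : Fin N, ∀ n : ℕ,
      (zGen N q i * zsGen N q i) ^ n =
        ∑ t ∈ Finset.range (n + 1),
          aCoef q t n •
            (zGen N q i ^ t * zsGen N q i ^ t * OmegaEl N q ((i : ℕ) + 1) ^ (n - t))) ∧
    (∀ t s : ℕ, 1 ≤ s → s ≤ t - 1 → aCoef q t s = 0) ∧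
    (∀ t : ℕ, 1 ≤ t → aCoef q t t = 1) := by
  have hsz : ∀ i : Fin N, zsGen N q i * zGen N q i
      = zGen N q i * zsGen N q i - (q ^ 2 - 1) • OmegaEl N q ((i : ℕ) + 1) :=
    fun i => heis_sz i
  have hwz := fun i : Fin N => Omega_z (N := N) hq i
  have hws := fun i : Fin N => Omega_s (N := N) hq i
  refine ⟨fun i n => abs_main hq (hsz i) (hwz i) (hws i) hq' n, ?_, ?_⟩
  · intro t s hs hst
    exact aCoef_vanish q hq hq' t s hs hst
  · intro t ht
    exact aCoef_diag q hq hq' t ht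
end
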